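/- For every integer n ≥ 3, the normalised degree variance of the star graph on n vertices satisfies v̄(G*(n,1)) = (n³ − 5n² + 8n − 4)/(n³ − 3n² + 2n). -/

import Mathlib

/-- The perfect quasi-star graph `G*(n,p)`: the simple graph on vertex set `{0,…,n-1}`
(a copy of `{1,…,n}`) in which the first `p` vertices (the dominant vertices) are
adjacent to all other vertices and there are no other edges. -/
def quasiStar (n p : ℕ) : SimpleGraph (Fin n) where
  Adj i j := i ≠ j ∧ ((i : ℕ) < p ∨ (j : ℕ) < p)
  symm := ⟨fun _ _ h => ⟨h.1.symm, h.2.symm⟩⟩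
  loopless := ⟨fun _ h => h.1 rfl⟩

instance (n p : ℕ) : DecidableRel (quasiStar n p).Adj :=
  fun i j => inferInstanceAs (Decidable (i ≠ j ∧ ((i : ℕ) < p ∨ (j : ℕ) < p)))

/-- The degree variance of a finite simple graph `G` on `n` vertices with `m` edges:
`v(G) = (1/(n-1)) · ∑ i, (k_i - 2m/n)^2`. -/
noncomputable def degVar {n : ℕ} (G : SimpleGraph (Fin n)) [DecidableRel G.Adj] : ℝ :=
  (1 / ((n : ℝ) - 1)) *
    ∑ i, ((G.degree i : ℝ) - 2 * (G.edgeFinset.card : ℝ) / n) ^ 2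

/-- The normalised degree variance `v̄(G) = ((n-1)/(n·m·(1-d))) · v(G)`, where
`d = 2m/(n(n-1))` is the density. -/
noncomputable def normDegVar {n : ℕ} (G : SimpleGraph (Fin n)) [DecidableRel G.Adj] : ℝ :=
  ((n : ℝ) - 1) /
      ((n : ℝ) * (G.edgeFinset.card : ℝ) *
        (1 - 2 * (G.edgeFinset.card : ℝ) / ((n : ℝ) * ((n : ℝ) - 1)))) *
    degVar G


/-!
Every vertex of the star `G*(n,1)` is a leaf except the centre, of degree `n - 1`, so there
are `m = n - 1` edges and the mean degree is `2(n-1)/n`. The squared deviations sum to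
`(n-1)(n-2)²/n`, whence `v = (n-2)²/n`; the density correction is `1 - d = (n-2)/n`, and
altogether `v̄ = (n-2)/n`, which is the stated quotient after cancelling `(n-1)(n-2)`.
-/

open Finset

section QuasiStar

variable (n p : ℕ)

@[simp]
theorem quasiStar_adj {i j : Fin n} :
    (quasiStar n p).Adj i j ↔ i ≠ j ∧ ((i : ℕ) < p ∨ (j : ℕ) < p) :=
  Iff.rfl

theorem quasiStar_degree (i : Fin n) :
    (quasiStar n p).degree i = if (i : ℕ) < p then n - 1 else min n p := by
  rw [← SimpleGraph.card_neighborFinset_eq_degree]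
  split_ifs with hi
  · have : (quasiStar n p).neighborFinset i = univ.erase i := by
      ext j
      simp [hi, eq_comm]
    rw [this, card_erase_of_mem (mem_univ _), card_univ, Fintype.card_fin]
  · have : (quasiStar n p).neighborFinset i = ({j : Fin n | (j : ℕ) < p} : Finset (Fin n)) := by
      ext j
      simp only [SimpleGraph.mem_neighborFinset, quasiStar_adj, mem_filter_univ]
      exact ⟨fun h => h.2.resolve_left hi, fun hj => ⟨fun hij => hi (hij ▸ hj), Or.inr hj⟩⟩
    rw [this, Fin.card_filter_val_lt]

theorem sum_comp_degree_quasiStar {M : Type*} [AddCommMonoid M] (f : ℕ → M) :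
    ∑ i, f ((quasiStar n p).degree i) = min n p • f (n - 1) + (n - min n p) • f (min n p) := by
  have hlt : #{i : Fin n | (i : ℕ) < p} = min n p := Fin.card_filter_val_lt
  have hge : #{i : Fin n | ¬ (i : ℕ) < p} = n - min n p := by
    have := card_filter_add_card_filter_not (s := univ) (fun i : Fin n => (i : ℕ) < p)
    rw [hlt, card_fin] at this
    omega
  simp_rw [quasiStar_degree, apply_ite f]
  rw [sum_ite, sum_const, sum_const, hlt, hge]

theorem two_mul_card_edgeFinset_quasiStar :
    2 * #(quasiStar n p).edgeFinset = min n p * (n - 1) + (n - min n p) * min n p := by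
  rw [← SimpleGraph.sum_degrees_eq_twice_card_edges]
  simpa using sum_comp_degree_quasiStar n p id

end QuasiStar

section Star

variable {n : ℕ}

theorem card_edgeFinset_quasiStar_one (hn : 1 ≤ n) : #(quasiStar n 1).edgeFinset = n - 1 := by
  have h := two_mul_card_edgeFinset_quasiStar n 1
  rw [min_eq_right hn] at h
  omega

theorem degVar_quasiStar_one (hn : 2 ≤ n) : degVar (quasiStar n 1) = ((n : ℝ) - 2) ^ 2 / n := by
  have hn' : (n : ℝ) - 1 ≠ 0 := by
    have : (2 : ℝ) ≤ n := by exact_mod_cast hn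
    linarith
  rw [degVar, card_edgeFinset_quasiStar_one (by omega), Nat.cast_pred (by omega),
    sum_comp_degree_quasiStar n 1 (fun k => ((k : ℝ) - 2 * (n - 1) / n) ^ 2),
    min_eq_right (by omega), nsmul_eq_mul, nsmul_eq_mul, Nat.cast_pred (by omega)]
  field_simp
  push_cast
  ring

theorem normDegVar_quasiStar_one (hn : 2 ≤ n) :
    normDegVar (quasiStar n 1) = ((n : ℝ) - 2) / n := by
  have hn' : (n : ℝ) - 1 ≠ 0 := by
    have : (2 : ℝ) ≤ n := by exact_mod_cast hn
    linarith
  rw [normDegVar, degVar_quasiStar_one hn, card_edgeFinset_quasiStar_one (by omega),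
    Nat.cast_pred (by omega)]
  rcases eq_or_ne ((n : ℝ) - 2) 0 with h2 | h2
  · simp [h2]
  · field_simp

end Star

/-- **Normalised degree variance of the star graph.**  For every integer `n ≥ 3`, the
star graph on `n` vertices (the perfect quasi-star graph `G*(n,1)`) satisfies
`v̄(G*(n,1)) = (n³ - 5n² + 8n - 4)/(n³ - 3n² + 2n)`. -/
theorem normDegVar_star (n : ℕ) (hn : 3 ≤ n) :
    normDegVar (quasiStar n 1)
      = ((n : ℝ) ^ 3 - 5 * (n : ℝ) ^ 2 + 8 * (n : ℝ) - 4)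
          / ((n : ℝ) ^ 3 - 3 * (n : ℝ) ^ 2 + 2 * (n : ℝ)) := by
  have h3 : (3 : ℝ) ≤ n := by exact_mod_cast hn
  have h1 : (n : ℝ) - 1 ≠ 0 := by linarith
  have h2 : (n : ℝ) - 2 ≠ 0 := by linarith
  rw [normDegVar_quasiStar_one (by omega),
    show (n : ℝ) ^ 3 - 5 * n ^ 2 + 8 * n - 4 = (n - 1) * (n - 2) * (n - 2) by ring,
    show (n : ℝ) ^ 3 - 3 * n ^ 2 + 2 * n = (n - 1) * (n - 2) * n by ring,
    mul_div_mul_left _ _ (mul_ne_zero h1 h2)]
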